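/- Let (P, ∘, [·,·]) be a finite-dimensional transposed Poisson algebra over an algebraically closed field F of characteristic different from 2. Then there exist ideals D and N of P such that P = D ⊕ N, the algebra (D, ∘) is unital, and the algebra (N, ∘) is nilpotent. Moreover, D decomposes as a direct sum D = ⊕_{i∈Δ} D_i of ideals D_i such that for every x ∈ D_i the restriction of P_x to D_i has a unique eigenvalue. -/

import Mathlib

/-- Left-nested product `(...((a ∘ b₁) ∘ b₂) ∘ ...) ∘ bₘ` of an element with a list,
with respect to a bilinear multiplication `mul`. For an associative commutative
multiplication this computes the product of the `m+1` elements `a, b₁, …, bₘ`. -/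
def nprod {F A : Type*} [Field F] [AddCommGroup A] [Module F A]
    (mul : A →ₗ[F] A →ₗ[F] A) : A → List A → A
  | a, [] => a
  | a, b :: l => nprod mul (mul a b) l

/-!
For `a ∈ P` the commutative algebra `F[P_a]` is Artinian, so `P_a ^ n = P_a ^ (n+1) s` for some
`s ∈ F[P_a]`, and `E = (P_a s) ^ (n+1)` is an idempotent with `P_a ^ n (1 - E) = 0`. Since `s`
commutes with every `P_y`, `E = P_f` for an idempotent `f ∈ a ∘ P` (the Fitting idempotent of `a`);
`P_f` kills the kernel of `P_a`, fixes its eigenvectors of nonzero eigenvalue, and `f = 0` only if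
`P_a` is nilpotent.

Take an idempotent `e` with `ker P_e` of least dimension and put `D = e ∘ P`, `N = ker P_e`. If
`e ∘ a = 0` and `P_a` were not nilpotent, `e + f` would be an idempotent with a smaller kernel; so
the operators `P_b`, `b ∈ N`, are commuting nilpotents and `N` is nilpotent. Writing `e` as a sum
of orthogonal primitive idempotents `g` gives `D = ⨁ g ∘ P`; on `g ∘ P` two distinct eigenvalues
`λ ≠ μ` of `P_x` are impossible, since the Fitting idempotent of `x - λ g` lies in `g ∘ P`, fixes
the `μ`-eigenvectors and kills the `λ`-eigenvectors, so it is neither `0` nor `g`. Finally the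
transposed Leibniz rule at `x = e`, `2 e ∘ [y, z] = [e ∘ y, z] + [y, e ∘ z]`, shows that `e ∘ P`
and `ker P_e` are Lie ideals.
-/

open Module
open LinearMap (ker range)

theorem IsArtinianRing.exists_fittingIdempotent {B : Type*} [CommRing B]
    [IsArtinianRing B] (t : B) :
    ∃ (e s : B) (n : ℕ), IsIdempotentElem e ∧ e = t * s ∧ t ^ n * (1 - e) = 0 := by
  obtain ⟨n, y, hy⟩ := IsArtinian.exists_pow_succ_smul_dvd t (1 : B)
  simp only [smul_eq_mul, mul_one, Nat.succ_eq_add_one] at hy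
  have key : ∀ k, t ^ n = t ^ (n + k) * y ^ k := by
    intro k
    induction k with
    | zero => simp
    | succ k ih => rw [ih]; linear_combination (-(t ^ k * y ^ k)) * hy
  refine ⟨(t * y) ^ (n + 1), y * (t * y) ^ n, n + 1, ?_, by ring, ?_⟩
  · unfold IsIdempotentElem
    linear_combination (-(t * y ^ (n + 1))) * key (n + 1)
  · linear_combination t * key (n + 1)

theorem exists_fittingIdempotent_of_finiteDimensional {F A : Type*} [Field F] [Ring A] [Algebra F A]
    [FiniteDimensional F A] (t : A) :
    ∃ (e s : A) (n : ℕ), IsIdempotentElem e ∧ e = t * s ∧ s ∈ Algebra.adjoin F {t} ∧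
      t ^ n * (1 - e) = 0 := by
  have : IsArtinianRing (Algebra.adjoin F {t}) := IsArtinianRing.of_finite F _
  obtain ⟨e, s, n, he, hes, hn⟩ := IsArtinianRing.exists_fittingIdempotent
    (⟨t, Algebra.self_mem_adjoin_singleton F t⟩ : Algebra.adjoin F {t})
  exact ⟨e, s, n, he.map (Algebra.adjoin F {t}).val, congrArg Subtype.val hes, s.2,
    congrArg Subtype.val hn⟩

theorem Submodule.map_lt_of_isNilpotent {R V : Type*} [Semiring R] [AddCommMonoid V]
    [Module R V] {T : Module.End R V} (hT : IsNilpotent T) {W : Submodule R V} (hTW : W.map T ≤ W)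
    (hW : W ≠ ⊥) : W.map T < W := by
  refine lt_of_le_of_ne hTW fun hfix => hW ?_
  obtain ⟨k, hk⟩ := hT
  have hpow : ∀ j, W.map (T ^ j) = W := by
    intro j
    induction j with
    | zero => rw [pow_zero, Module.End.one_eq_id, Submodule.map_id]
    | succ j ih => rw [pow_succ', Module.End.mul_eq_comp, Submodule.map_comp, ih, hfix]
  rw [← hpow k, hk, Submodule.map_zero]

section CommutingNilpotent

variable {F V : Type*} [Field F] [AddCommGroup V] [Module F V] [FiniteDimensional F V]

theorem Module.End.finrank_range_list_prod_le (l : List (Module.End F V))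
    (hcomm : ∀ S ∈ l, ∀ T ∈ l, Commute S T) (hnil : ∀ T ∈ l, IsNilpotent T) :
    finrank F (range l.prod) ≤ finrank F V - l.length := by
  induction l with
  | nil => exact LinearMap.finrank_range_le _
  | cons T l ih =>
    have ih := ih (fun S hS U hU => hcomm S (List.mem_cons_of_mem _ hS) U
      (List.mem_cons_of_mem _ hU)) (fun S hS => hnil S (List.mem_cons_of_mem _ hS))
    rw [List.prod_cons, Module.End.mul_eq_comp, LinearMap.range_comp, List.length_cons]
    by_cases hW : range l.prod = ⊥
    · rw [hW, Submodule.map_bot, finrank_bot]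
      exact Nat.zero_le _
    have hTW : (range l.prod).map T ≤ range l.prod := by
      rw [← LinearMap.range_comp, ← Module.End.mul_eq_comp,
        (Commute.list_prod_right _ _ fun U hU => hcomm T List.mem_cons_self U
          (List.mem_cons_of_mem _ hU)).eq, Module.End.mul_eq_comp]
      exact LinearMap.range_comp_le_range _ _
    have := Submodule.finrank_lt_finrank_of_lt
      (Submodule.map_lt_of_isNilpotent (hnil T List.mem_cons_self) hTW hW)
    omega

theorem Module.End.list_prod_eq_zero_of_isNilpotent (l : List (Module.End F V))
    (hcomm : ∀ S ∈ l, ∀ T ∈ l, Commute S T) (hnil : ∀ T ∈ l, IsNilpotent T)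
    (hlen : finrank F V ≤ l.length) : l.prod = 0 := by
  have := finrank_range_list_prod_le l hcomm hnil
  rw [← LinearMap.range_eq_bot, ← Submodule.finrank_eq_zero]
  omega

end CommutingNilpotent

section CommAssoc

variable {F P : Type*} [Field F] [AddCommGroup P] [Module F P] {mul : P →ₗ[F] P →ₗ[F] P}
  (hcomm : ∀ x y : P, mul x y = mul y x)
  (hassoc : ∀ x y z : P, mul (mul x y) z = mul x (mul y z))

include hassoc in
theorem mul_mul_eq_mul (x y : P) : mul (mul x y) = mul x * mul y :=
  LinearMap.ext (hassoc x y)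

include hcomm hassoc in
theorem commute_mul (x y : P) : Commute (mul x) (mul y) := by
  rw [Commute, SemiconjBy, ← mul_mul_eq_mul hassoc, ← mul_mul_eq_mul hassoc, hcomm]

include hassoc in
theorem isIdempotentElem_mul {e : P} (he : mul e e = e) : IsIdempotentElem (mul e) := by
  rw [IsIdempotentElem, ← mul_mul_eq_mul hassoc, he]

include hassoc in
theorem mem_range_mul_iff {e x : P} (he : mul e e = e) : x ∈ range (mul e) ↔ mul e x = x :=
  LinearMap.IsIdempotentElem.mem_range_iff (isIdempotentElem_mul hassoc he)

include hcomm in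
theorem mul_apply_eq_mul_of_commute {S : Module.End F P} (hS : ∀ y, Commute S (mul y))
    (a : P) : mul (S a) = S * mul a := by
  ext y
  rw [hcomm, ← Module.End.mul_apply, ← (hS y).eq, Module.End.mul_apply, Module.End.mul_apply,
    hcomm]

include hcomm hassoc in
theorem mul_eq_zero_of_orthogonal {h h' g g' : P} (hh' : mul h h' = 0) (hg : mul h g = g)
    (hg' : mul h' g' = g') : mul g g' = 0 := by
  rw [← hg, ← hg', hcomm h g, hassoc, ← hassoc h, hh', map_zero, LinearMap.zero_apply, map_zero]

include hcomm in
theorem nprod_eq_list_prod (a : P) (l : List P) :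
    nprod mul a l = (l.reverse.map mul).prod a := by
  induction l generalizing a with
  | nil => rfl
  | cons b l ih => simp [nprod, ih, hcomm a b]

include hcomm hassoc in
theorem nprod_eq_zero_of_isNilpotent [FiniteDimensional F P] (a : P) {l : List P}
    (hnil : ∀ b ∈ l, IsNilpotent (mul b)) (hlen : finrank F P ≤ l.length) :
    nprod mul a l = 0 := by
  rw [nprod_eq_list_prod hcomm, Module.End.list_prod_eq_zero_of_isNilpotent,
    LinearMap.zero_apply]
  · simp only [List.mem_map, List.mem_reverse]
    rintro _ ⟨x, -, rfl⟩ _ ⟨y, -, rfl⟩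
    exact commute_mul hcomm hassoc x y
  · simp only [List.mem_map, List.mem_reverse]
    rintro _ ⟨x, hx, rfl⟩
    exact hnil x hx
  · simpa using hlen

include hcomm hassoc in
theorem exists_fittingIdempotent_mul [FiniteDimensional F P] (a : P) :
    ∃ f ∈ range (mul a), mul f f = f ∧ (f = 0 → IsNilpotent (mul a)) ∧
      ∀ ⦃μ : F⦄ ⦃v : P⦄, μ ≠ 0 → Module.End.HasEigenvector (mul a) μ v → mul f v = v := by
  obtain ⟨E, S, n, hE, rfl, hS, hn⟩ :=
    exists_fittingIdempotent_of_finiteDimensional (F := F) (mul a)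
  have hScomm : ∀ y, Commute S (mul y) := fun y =>
    (Algebra.commute_of_mem_adjoin_of_forall_mem_commute hS
      (by simpa using commute_mul hcomm hassoc y a)).symm
  set g := S a
  have hg : mul g = mul a * S := by
    rw [mul_apply_eq_mul_of_commute hcomm hScomm, (hScomm a).eq]
  have hgg : mul (mul g g) = mul g := by rw [mul_mul_eq_mul hassoc, hg, hE.eq]
  refine ⟨mul g g, ⟨S g, by rw [hg]; rfl⟩, by rw [hgg, ← hassoc, hgg], fun h0 => ?_, ?_⟩
  · refine ⟨n, ?_⟩
    rw [← hgg, h0, map_zero] at hg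
    simpa [← hg] using hn
  · intro μ v hμ hv
    have hcomm' : Commute (mul a ^ n) (1 - mul a * S) :=
      ((Commute.one_right _).sub_right ((Commute.refl _).mul_right (hScomm a).symm)).pow_left n
    have h := congrArg (· v) (hcomm'.eq ▸ hn)
    simp only [Module.End.mul_apply, hv.pow_apply, map_smul, LinearMap.zero_apply] at h
    rw [smul_eq_zero, LinearMap.sub_apply, Module.End.one_apply, sub_eq_zero] at h
    rw [hgg, hg]
    exact (h.resolve_left (pow_ne_zero n hμ)).symm

variable (mul) in
theorem exists_idempotent_forall_finrank_ker_le [FiniteDimensional F P] :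
    ∃ e : P, mul e e = e ∧
      ∀ f : P, mul f f = f → finrank F (ker (mul e)) ≤ finrank F (ker (mul f)) := by
  classical
  have hex : ∃ r, ∃ e : P, mul e e = e ∧ finrank F (ker (mul e)) = r := ⟨_, 0, by simp, rfl⟩
  obtain ⟨e, he, hr⟩ := Nat.find_spec hex
  exact ⟨e, he, fun f hf => hr ▸ Nat.find_min' hex ⟨f, hf, rfl⟩⟩

include hcomm hassoc in
theorem isNilpotent_mul_of_mul_eq_zero [FiniteDimensional F P] {e : P} (he : mul e e = e)
    (hmin : ∀ f : P, mul f f = f → finrank F (ker (mul e)) ≤ finrank F (ker (mul f)))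
    {a : P} (ha : mul e a = 0) : IsNilpotent (mul a) := by
  by_contra hna
  obtain ⟨_, ⟨z, rfl⟩, hf, hf0, -⟩ := exists_fittingIdempotent_mul hcomm hassoc a
  set f := mul a z
  have hef : mul e f = 0 := by rw [← hassoc, ha, map_zero, LinearMap.zero_apply]
  have hfe : mul f e = 0 := by rw [hcomm, hef]
  have he' : mul (e + f) (e + f) = e + f := by simp [he, hf, hef, hfe]
  have hlt : ker (mul (e + f)) < ker (mul e) := by
    refine lt_of_le_of_ne (fun x hx => ?_) fun heq => ?_
    · rw [LinearMap.mem_ker, map_add, LinearMap.add_apply] at hx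
      have := congrArg (mul e) hx
      rwa [map_add, ← hassoc e f, hef, map_zero, LinearMap.zero_apply, add_zero,
        ← hassoc, he, map_zero] at this
    · have hfker : f ∈ ker (mul (e + f)) := heq ▸ hef
      rw [LinearMap.mem_ker, map_add, LinearMap.add_apply, hef, hf, zero_add] at hfker
      exact hna (hf0 hfker)
  exact (Submodule.finrank_lt_finrank_of_lt hlt).not_ge (hmin _ he')

include hcomm hassoc in
theorem range_mul_lt_range_mul {e h : P} (he : mul e e = e) (hh : mul h h = h)
    (heh : mul e h = h) (hne : h ≠ e) : range (mul h) < range (mul e) := by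
  refine lt_of_le_of_ne ?_ fun heq => hne ?_
  · rintro _ ⟨y, rfl⟩
    exact ⟨mul h y, by rw [← hassoc, heh]⟩
  · have : mul h e = e := (mem_range_mul_iff hassoc hh).mp (heq ▸ ⟨e, he⟩)
    rwa [hcomm, heh] at this

variable (mul) in
structure IsPrimitiveIdempotent (g : P) : Prop where
  idem : mul g g = g
  ne_zero : g ≠ 0
  eq_zero_or_eq : ∀ h : P, mul h h = h → mul g h = h → h = 0 ∨ h = g

include hcomm hassoc in
theorem exists_list_isPrimitiveIdempotent_sum_eq [FiniteDimensional F P] {e : P}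
    (he : mul e e = e) :
    ∃ L : List P, (∀ g ∈ L, IsPrimitiveIdempotent mul g ∧ mul e g = g) ∧
      L.Pairwise (fun g g' => mul g g' = 0) ∧ L.sum = e := by
  induction hr : finrank F (range (mul e)) using Nat.strong_induction_on generalizing e with
  | _ r ih =>
    by_cases he0 : e = 0
    · exact ⟨[], by simp, List.Pairwise.nil, by simp [he0]⟩
    by_cases hprim : ∀ h : P, mul h h = h → mul e h = h → h = 0 ∨ h = e
    · exact ⟨[e], by simpa using ⟨⟨he, he0, hprim⟩, he⟩, List.pairwise_singleton _ _,
        List.sum_singleton⟩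
    push Not at hprim
    obtain ⟨h, hh, heh, hh0, hhe⟩ := hprim
    set h' := e - h
    have heh' : mul e h' = h' := by simp [h', he, heh]
    have hhh' : mul h h' = 0 := by simp [h', hcomm h e, heh, hh]
    have hh' : mul h' h' = h' := by simp [h', heh', hhh']
    have hlt : ∀ {k}, mul k k = k → mul e k = k → k ≠ e → finrank F (range (mul k)) < r :=
      fun hk hek hke => hr ▸ Submodule.finrank_lt_finrank_of_lt
        (range_mul_lt_range_mul hcomm hassoc he hk hek hke)
    obtain ⟨L₁, hL₁, hpw₁, hsum₁⟩ := ih _ (hlt hh heh hhe) hh rfl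
    obtain ⟨L₂, hL₂, hpw₂, hsum₂⟩ := ih _ (hlt hh' heh' (by simpa [h'] using hh0)) hh' rfl
    refine ⟨L₁ ++ L₂, ?_, List.pairwise_append.mpr ⟨hpw₁, hpw₂, fun g hg g' hg' =>
      mul_eq_zero_of_orthogonal hcomm hassoc hhh' (hL₁ g hg).2 (hL₂ g' hg').2⟩,
      by rw [List.sum_append, hsum₁, hsum₂, add_sub_cancel]⟩
    intro g hg
    rcases List.mem_append.mp hg with hg | hg
    · exact ⟨(hL₁ g hg).1, by rw [← (hL₁ g hg).2, ← hassoc, heh]⟩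
    · exact ⟨(hL₂ g hg).1, by rw [← (hL₂ g hg).2, ← hassoc, heh']⟩

include hcomm hassoc in
theorem exists_isPrimitiveIdempotent_family [FiniteDimensional F P] {e : P} (he : mul e e = e) :
    ∃ (n : ℕ) (g : Fin n → P), (∀ i, IsPrimitiveIdempotent mul (g i) ∧ mul e (g i) = g i) ∧
      Pairwise (fun i j => mul (g i) (g j) = 0) ∧ ∑ i, g i = e := by
  obtain ⟨L, hL, hpw, hsum⟩ := exists_list_isPrimitiveIdempotent_sum_eq hcomm hassoc he
  refine ⟨L.length, fun i => L[i], fun i => hL _ (List.getElem_mem _), fun i j hij => ?_,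
    (Fin.sum_univ_getElem L).trans hsum⟩
  rcases lt_or_gt_of_ne hij with h | h
  · exact List.pairwise_iff_getElem.mp hpw _ _ _ _ h
  · rw [hcomm]
    exact List.pairwise_iff_getElem.mp hpw _ _ _ _ h

include hassoc in
theorem iSupIndep_range_mul {ι : Type*} {g : ι → P} (hg : ∀ i, mul (g i) (g i) = g i)
    (horth : Pairwise fun i j => mul (g i) (g j) = 0) :
    iSupIndep fun i => range (mul (g i)) := by
  refine iSupIndep_def.mpr fun i =>
    (LinearMap.IsIdempotentElem.isCompl (isIdempotentElem_mul hassoc (hg i))).disjoint.mono_right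
      (iSup₂_le fun j hji => ?_)
  rintro _ ⟨y, rfl⟩
  rw [LinearMap.mem_ker, ← hassoc, horth hji.symm, map_zero, LinearMap.zero_apply]

include hassoc in
theorem iSup_range_mul_eq {ι : Type*} [Fintype ι] {g : ι → P} {e : P}
    (hle : ∀ i, mul e (g i) = g i) (hsum : ∑ i, g i = e) :
    ⨆ i, range (mul (g i)) = range (mul e) := by
  refine le_antisymm (iSup_le fun i => ?_) ?_
  · rintro _ ⟨y, rfl⟩
    exact ⟨mul (g i) y, by rw [← hassoc, hle]⟩
  · rintro _ ⟨y, rfl⟩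
    rw [← hsum, map_sum, LinearMap.sum_apply]
    exact Submodule.sum_mem _ fun i _ => Submodule.mem_iSup_of_mem i ⟨y, rfl⟩

include hcomm hassoc in
theorem eq_of_apply_eq_smul_of_isPrimitiveIdempotent [FiniteDimensional F P] {g x v w : P}
    {μ ν : F} (hg : IsPrimitiveIdempotent mul g) (hx : mul g x = x)
    (hv : v ≠ 0) (hw : w ≠ 0) (hgv : mul g v = v) (hgw : mul g w = w)
    (hxv : mul x v = μ • v) (hxw : mul x w = ν • w) : μ = ν := by
  by_contra hne
  set b := x - μ • g
  obtain ⟨_, ⟨z, rfl⟩, hh, -, hfix⟩ := exists_fittingIdempotent_mul hcomm hassoc b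
  have hbv : mul b v = 0 := by simp [b, hxv, hgv]
  have hbw : Module.End.HasEigenvector (mul b) (ν - μ) w :=
    ⟨by simp [b, hxw, hgw, sub_smul], hw⟩
  have hhw := hfix (sub_ne_zero.mpr (Ne.symm hne)) hbw
  have hhv : mul (mul b z) v = 0 := by rw [hcomm b z, hassoc, hbv, map_zero]
  have hgb : mul g b = b := by simp [b, hx, hg.idem]
  rcases hg.eq_zero_or_eq (mul b z) hh (by rw [← hassoc, hgb]) with h0 | hbz
  · rw [h0, map_zero, LinearMap.zero_apply] at hhw
    exact hw hhw.symm
  · rw [hbz, hgv] at hhv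
    exact hv hhv

include hcomm hassoc in
theorem existsUnique_eigenvalue_of_isPrimitiveIdempotent [IsAlgClosed F] [FiniteDimensional F P]
    {g x : P} (hg : IsPrimitiveIdempotent mul g) (hx : x ∈ range (mul g)) :
    ∃! μ : F, ∃ v ∈ range (mul g), v ≠ 0 ∧ mul x v = μ • v := by
  have hrange : ∀ {y}, y ∈ range (mul g) ↔ mul g y = y := mem_range_mul_iff hassoc hg.idem
  have hinv : ∀ v ∈ range (mul g), mul x v ∈ range (mul g) := fun v _ =>
    hrange.mpr (by rw [← hassoc, hrange.mp hx])
  have : Nontrivial (range (mul g)) :=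
    nontrivial_of_ne ⟨g, hrange.mpr hg.idem⟩ 0 (by simpa using hg.ne_zero)
  obtain ⟨μ, hμ⟩ := Module.End.exists_eigenvalue ((mul x).restrict hinv)
  obtain ⟨⟨v, hv⟩, hvμ⟩ := hμ.exists_hasEigenvector
  have hv0 : v ≠ 0 := by simpa using hvμ.2
  have hxv : mul x v = μ • v := congrArg Subtype.val hvμ.apply_eq_smul
  refine ⟨μ, ⟨v, hv, hv0, hxv⟩, fun ν ⟨w, hw, hw0, hxw⟩ => ?_⟩
  exact eq_of_apply_eq_smul_of_isPrimitiveIdempotent hcomm hassoc hg (hrange.mp hx) hw0 hv0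
    (hrange.mp hw) (hrange.mp hv) hxw hxv

end CommAssoc

section TransposedPoisson

variable {F P : Type*} [Field F] [AddCommGroup P] [Module F P] {mul bra : P →ₗ[F] P →ₗ[F] P}
  (hcomm : ∀ x y : P, mul x y = mul y x)
  (hassoc : ∀ x y z : P, mul (mul x y) z = mul x (mul y z))
  (hchar : (2 : F) ≠ 0) (halt : ∀ x : P, bra x x = 0)
  (hleib : ∀ x y z : P, (2 : F) • mul x (bra y z) = bra (mul x y) z + bra y (mul x z))

variable (mul bra) in
def IsTransposedPoissonIdeal (I : Submodule F P) : Prop :=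
  ∀ y : P, ∀ x ∈ I, mul y x ∈ I ∧ bra y x ∈ I

include hassoc hleib in
theorem bra_mul_eq_zero_of_orthogonal {e n : P} (he : mul e e = e) (hn : mul e n = 0) (y : P) :
    bra (mul e y) n = 0 := by
  set u := bra (mul e y) n
  have hu : (2 : F) • mul e u = u := by
    rw [hleib, ← hassoc, he, hn, map_zero, add_zero]
  have heu : mul e u = 0 := by
    have := congrArg (mul e) hu
    rwa [map_smul, ← hassoc, he, two_smul, add_eq_right] at this
  rw [← hu, heu, smul_zero]

include hchar hassoc hleib in
theorem mul_bra_eq_zero {e n : P} (he : mul e e = e) (hn : mul e n = 0) (y : P) :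
    mul e (bra y n) = 0 := by
  have h := hleib e y n
  rw [hn, map_zero, add_zero, bra_mul_eq_zero_of_orthogonal hassoc hleib he hn] at h
  exact (smul_eq_zero.mp h).resolve_left hchar

include hchar hassoc halt hleib in
theorem mul_bra_eq_self {e d : P} (he : mul e e = e) (hd : mul e d = d) (y : P) :
    mul e (bra y d) = bra y d := by
  have hn : mul e (y - mul e y) = 0 := by rw [map_sub, ← hassoc, he, sub_self]
  have hyd : bra (mul e y) d = bra y d := by
    have h0 : bra (y - mul e y) d = 0 := by
      rw [← LinearMap.IsAlt.neg halt, ← hd, bra_mul_eq_zero_of_orthogonal hassoc hleib he hn,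
        neg_zero]
    rwa [map_sub, LinearMap.sub_apply, sub_eq_zero, eq_comm] at h0
  have h := hleib e y d
  rw [hd, hyd, ← two_smul F (bra y d)] at h
  exact smul_right_injective P hchar h

include hcomm hassoc hchar halt hleib in
theorem isTransposedPoissonIdeal_range {e : P} (he : mul e e = e) :
    IsTransposedPoissonIdeal mul bra (range (mul e)) := by
  intro y x hx
  simp only [mem_range_mul_iff hassoc he] at hx ⊢
  exact ⟨by rw [← hassoc, hcomm e y, hassoc, hx],
    mul_bra_eq_self hassoc hchar halt hleib he hx y⟩

include hcomm hassoc hchar hleib in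
theorem isTransposedPoissonIdeal_ker {e : P} (he : mul e e = e) :
    IsTransposedPoissonIdeal mul bra (ker (mul e)) := by
  intro y x hx
  simp only [LinearMap.mem_ker] at hx ⊢
  exact ⟨by rw [← hassoc, hcomm e y, hassoc, hx, map_zero],
    mul_bra_eq_zero hassoc hchar hleib he hx y⟩

end TransposedPoisson

theorem tpa_decomposition_general {F P : Type*} [Field F] [IsAlgClosed F] (hchar : (2 : F) ≠ 0)
    [AddCommGroup P] [Module F P] [FiniteDimensional F P]
    (mul bra : P →ₗ[F] P →ₗ[F] P)
    (hcomm : ∀ x y : P, mul x y = mul y x)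
    (hassoc : ∀ x y z : P, mul (mul x y) z = mul x (mul y z))
    (halt : ∀ x : P, bra x x = 0)
    (hleib : ∀ x y z : P, (2 : F) • mul x (bra y z) = bra (mul x y) z + bra y (mul x z)) :
    ∃ D N : Submodule F P,
      -- D and N are ideals of the transposed Poisson algebra
      (∀ y : P, ∀ x ∈ D, mul y x ∈ D ∧ bra y x ∈ D)
      ∧ (∀ y : P, ∀ x ∈ N, mul y x ∈ N ∧ bra y x ∈ N)
      -- P = D ⊕ N
      ∧ D ⊓ N = ⊥ ∧ D ⊔ N = ⊤
      -- (D, ∘) is unital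
      ∧ (∃ e ∈ D, ∀ x ∈ D, mul e x = x)
      -- (N, ∘) is nilpotent
      ∧ (∃ k : ℕ, 1 ≤ k ∧ ∀ a ∈ N, ∀ l : List P, (∀ b ∈ l, b ∈ N) →
            l.length + 1 = k → nprod mul a l = 0)
      -- D = ⊕ᵢ Dᵢ, an independent supremum of ideals
      ∧ (∃ (ι : Type) (Di : ι → Submodule F P),
          (∀ i, ∀ y : P, ∀ x ∈ Di i, mul y x ∈ Di i ∧ bra y x ∈ Di i)
          ∧ iSupIndep Di ∧ (⨆ i, Di i) = D
          -- for every `x ∈ Dᵢ`, the restriction of `P_x` to `Dᵢ` has a unique eigenvalue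
          ∧ ∀ i, ∀ x ∈ Di i,
              ∃! lam : F, ∃ v ∈ Di i, v ≠ 0 ∧ mul x v = lam • v) := by
  obtain ⟨e, he, hmin⟩ := exists_idempotent_forall_finrank_ker_le mul
  obtain ⟨n, g, hg, horth, hsum⟩ := exists_isPrimitiveIdempotent_family hcomm hassoc he
  have hcompl := LinearMap.IsIdempotentElem.isCompl (isIdempotentElem_mul hassoc he)
  refine ⟨range (mul e), ker (mul e),
    isTransposedPoissonIdeal_range hcomm hassoc hchar halt hleib he,
    isTransposedPoissonIdeal_ker hcomm hassoc hchar hleib he, hcompl.inf_eq_bot, hcompl.sup_eq_top,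
    ⟨e, ⟨e, he⟩, fun x hx => (mem_range_mul_iff hassoc he).mp hx⟩,
    ⟨finrank F P + 1, by omega, fun a _ l hl hlen => nprod_eq_zero_of_isNilpotent hcomm hassoc a
      (fun b hb => isNilpotent_mul_of_mul_eq_zero hcomm hassoc he hmin (hl b hb)) (by omega)⟩,
    Fin n, fun i => range (mul (g i)),
    fun i => isTransposedPoissonIdeal_range hcomm hassoc hchar halt hleib (hg i).1.idem,
    iSupIndep_range_mul hassoc (fun i => (hg i).1.idem) horth,
    iSup_range_mul_eq hassoc (fun i => (hg i).2) hsum,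
    fun i x hx => existsUnique_eigenvalue_of_isPrimitiveIdempotent hcomm hassoc (hg i).1 hx⟩

/-- A finite-dimensional transposed Poisson algebra over an algebraically
closed field decomposes as a direct sum of ideals `P = D ⊕ N` with `(D, ∘)` unital and
`(N, ∘)` nilpotent; moreover `D` is a direct sum of ideals `Dᵢ` such that for every
`x ∈ Dᵢ` the restriction of `P_x` to `Dᵢ` has a unique eigenvalue. -/
theorem tpa_decomposition {F P : Type*} [Field F] [IsAlgClosed F] (hchar : (2 : F) ≠ 0)
    [AddCommGroup P] [Module F P] [FiniteDimensional F P]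
    (mul bra : P →ₗ[F] P →ₗ[F] P)
    (hcomm : ∀ x y : P, mul x y = mul y x)
    (hassoc : ∀ x y z : P, mul (mul x y) z = mul x (mul y z))
    (halt : ∀ x : P, bra x x = 0)
    (hjac : ∀ x y z : P, bra x (bra y z) + bra y (bra z x) + bra z (bra x y) = 0)
    (hleib : ∀ x y z : P, (2 : F) • mul x (bra y z) = bra (mul x y) z + bra y (mul x z)) :
    ∃ D N : Submodule F P,
      -- D and N are ideals of the transposed Poisson algebra
      (∀ y : P, ∀ x ∈ D, mul y x ∈ D ∧ bra y x ∈ D)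
      ∧ (∀ y : P, ∀ x ∈ N, mul y x ∈ N ∧ bra y x ∈ N)
      -- P = D ⊕ N
      ∧ D ⊓ N = ⊥ ∧ D ⊔ N = ⊤
      -- (D, ∘) is unital
      ∧ (∃ e ∈ D, ∀ x ∈ D, mul e x = x)
      -- (N, ∘) is nilpotent
      ∧ (∃ k : ℕ, 1 ≤ k ∧ ∀ a ∈ N, ∀ l : List P, (∀ b ∈ l, b ∈ N) →
            l.length + 1 = k → nprod mul a l = 0)
      -- D = ⊕ᵢ Dᵢ, an independent supremum of ideals
      ∧ (∃ (ι : Type) (Di : ι → Submodule F P),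
          (∀ i, ∀ y : P, ∀ x ∈ Di i, mul y x ∈ Di i ∧ bra y x ∈ Di i)
          ∧ iSupIndep Di ∧ (⨆ i, Di i) = D
          -- for every `x ∈ Dᵢ`, the restriction of `P_x` to `Dᵢ` has a unique eigenvalue
          ∧ ∀ i, ∀ x ∈ Di i,
              ∃! lam : F, ∃ v ∈ Di i, v ≠ 0 ∧ mul x v = lam • v) :=
  tpa_decomposition_general hchar mul bra hcomm hassoc halt hleib
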